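/- arXiv:2604.27501 — 6 statements merged into one kernel-verified Lean document; each statement's English description precedes it below -/
import Mathlib

section
/- Let F_q be a finite field of odd characteristic with q elements, let 0 < δ < 3/4, and let C > 0. Suppose that for all functions f₁, f₂ : F_q → ℂ one has ‖𝒜(f₁,f₂) − E[f₁]·E[f₂]‖₂ ≤ C·q^{−δ}·‖f₁‖₂·‖f₂‖₂. Then there exists a constant C' > 0 (depending only on C and δ) such that every subset A ⊆ F_q with |A| ≥ C'·q^{1−(2/3)δ} contains a nontrivial quadratic progression, i.e. there exist x ∈ F_q and y ≠ 0 with x, x+y, x+y² ∈ A. -/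
/-
Take `f = 𝟙_A`. Then `∑ₓ f(x)·𝒜(f,f)(x)` is `1/q` times the number `N` of pairs `(x, y)` with
`x, x + y, x + y² ∈ A`, of which only `|A|` have `y = 0`. Subtracting `E[f]²` and applying
Cauchy–Schwarz together with the hypothesis gives `|N/q² - α³| ≤ C q^{-δ} α^{3/2}` for the density
`α = |A|/q`. For `α ≥ C' q^{-2δ/3}` with `C' = (2C)^{2/3} + 2` the error is at most half the main
term, and `q²α³/2 > |A|` because `δ < 3/4` forces `α ≥ 2 q^{-1/2}`.
-/

open Finset

/-- The normalized average `E[f] = (1/q) ∑_x f(x)`. -/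
noncomputable def expect {F : Type} [Fintype F] (f : F → ℂ) : ℂ :=
  (∑ x, f x) / (Fintype.card F : ℂ)

/-- The normalized `L²` norm `‖f‖₂ = ((1/q) ∑_x |f(x)|²)^{1/2}`. -/
noncomputable def norm2 {F : Type} [Fintype F] (f : F → ℂ) : ℝ :=
  Real.sqrt ((∑ x, ‖f x‖ ^ 2) / (Fintype.card F : ℝ))

/-- The bilinear averaging operator `𝒜(f₁,f₂)(x) = (1/q) ∑_y f₁(x+y) f₂(x+y²)`. -/
noncomputable def bilinAvg {F : Type} [Field F] [Fintype F] (f₁ f₂ : F → ℂ) (x : F) : ℂ :=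
  (∑ y, f₁ (x + y) * f₂ (x + y ^ 2)) / (Fintype.card F : ℂ)

section NormalizedSums

variable {F : Type} [Fintype F]

lemma card_mul_norm2_mul_norm2 [Nonempty F] (f g : F → ℂ) :
    Fintype.card F * (norm2 f * norm2 g) = √(∑ x, ‖f x‖ ^ 2) * √(∑ x, ‖g x‖ ^ 2) := by
  have hq : (0 : ℝ) < Fintype.card F := by exact_mod_cast Fintype.card_pos
  simp only [norm2, Real.sqrt_div' _ hq.le]
  field_simp
  rw [Real.sq_sqrt hq.le]
  ring

lemma norm_sum_mul_le_card_mul_norm2_mul_norm2 [Nonempty F] (f g : F → ℂ) :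
    ‖∑ x, f x * g x‖ ≤ Fintype.card F * (norm2 f * norm2 g) := by
  rw [card_mul_norm2_mul_norm2]
  calc ‖∑ x, f x * g x‖ ≤ ∑ x, ‖f x‖ * ‖g x‖ := by
        simpa only [norm_mul] using norm_sum_le univ fun x => f x * g x
    _ ≤ _ := Real.sum_mul_le_sqrt_mul_sqrt _ _ _

variable (A : Finset F)

lemma sum_indicator_one : ∑ x, (A : Set F).indicator (1 : F → ℂ) x = A.card := by
  rw [sum_indicator_subset _ (subset_univ A)]
  simp

lemma expect_indicator_eq_dens : expect ((A : Set F).indicator 1) = (A.dens : ℝ) := by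
  rw [_root_.expect, sum_indicator_one, dens_eq_card_div_card]
  push_cast
  rfl

lemma norm2_indicator_eq_sqrt_dens : norm2 ((A : Set F).indicator 1) = √A.dens := by
  rw [norm2, dens_eq_card_div_card]
  push_cast
  congr 2
  have norm_sq (x : F) : ‖(A : Set F).indicator (1 : F → ℂ) x‖ ^ 2 = (A : Set F).indicator 1 x := by
    by_cases hx : x ∈ A <;> simp [hx]
  simp only [norm_sq]
  rw [sum_indicator_subset _ (subset_univ A)]
  simp

end NormalizedSums

def quadProgCount {R : Type} [Semiring R] [Fintype R] [DecidableEq R] (A : Finset R) : ℕ :=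
  #{p : R × R | p.1 ∈ A ∧ p.1 + p.2 ∈ A ∧ p.1 + p.2 ^ 2 ∈ A}

lemma exists_quadProg_of_card_lt_quadProgCount {R : Type} [Semiring R] [Fintype R]
    [DecidableEq R] {A : Finset R} (hA : A.card < quadProgCount A) :
    ∃ x y : R, y ≠ 0 ∧ x ∈ A ∧ x + y ∈ A ∧ x + y ^ 2 ∈ A := by
  by_contra! h
  have only_trivial : quadProgCount A ≤ #(A ×ˢ ({0} : Finset R)) := by
    refine card_le_card fun p hp => ?_
    obtain ⟨-, h₀, h₁, h₂⟩ := mem_filter.1 hp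
    by_cases hy : p.2 = 0
    · exact mem_product.2 ⟨h₀, mem_singleton.2 hy⟩
    · exact absurd h₂ (h _ _ hy h₀ h₁)
  rw [card_product, card_singleton, mul_one] at only_trivial
  exact hA.not_ge only_trivial

section QuadraticProgressions

variable {F : Type} [Field F] [Fintype F] [DecidableEq F]

lemma sum_indicator_mul_bilinAvg (A : Finset F) :
    ∑ x, (A : Set F).indicator 1 x * bilinAvg ((A : Set F).indicator 1) ((A : Set F).indicator 1) x
      = quadProgCount A / Fintype.card F := by
  simp only [bilinAvg, quadProgCount, natCast_card_filter, ← sum_div, mul_div_assoc', mul_sum,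
    Fintype.sum_prod_type]
  congr 1
  refine sum_congr rfl fun x _ => sum_congr rfl fun y _ => ?_
  simp only [Set.indicator_apply, mem_coe, Pi.one_apply, ite_and]
  split_ifs <;> simp

lemma abs_quadProgCount_div_sub_dens_pow_le {K : ℝ}
    (hK : ∀ f₁ f₂ : F → ℂ, norm2 (fun x => bilinAvg f₁ f₂ x - expect f₁ * expect f₂) ≤
      K * norm2 f₁ * norm2 f₂)
    (A : Finset F) :
    |(quadProgCount A : ℝ) / Fintype.card F ^ 2 - A.dens ^ 3| ≤ K * (A.dens * √A.dens) := by
  set f : F → ℂ := (A : Set F).indicator 1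
  have hq : (0 : ℝ) < Fintype.card F := by exact_mod_cast Fintype.card_pos (α := F)
  have hsum : ∑ x, f x * (bilinAvg f f x - expect f * expect f)
      = ((Fintype.card F * ((quadProgCount A : ℝ) / Fintype.card F ^ 2 - A.dens ^ 3) : ℝ) : ℂ) := by
    simp only [mul_sub, sum_sub_distrib, ← sum_mul, sum_indicator_mul_bilinAvg, sum_indicator_one,
      expect_indicator_eq_dens, f, dens_eq_card_div_card]
    push_cast
    field_simp
  have hCS := norm_sum_mul_le_card_mul_norm2_mul_norm2 f
    (fun x => bilinAvg f f x - expect f * expect f)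
  rw [hsum, Complex.norm_real, Real.norm_eq_abs, abs_mul, abs_of_pos hq,
    norm2_indicator_eq_sqrt_dens] at hCS
  have hbound := hK f f
  rw [norm2_indicator_eq_sqrt_dens, mul_assoc, Real.mul_self_sqrt (by positivity)] at hbound
  refine le_of_mul_le_mul_left (hCS.trans ?_) hq
  calc _ ≤ (Fintype.card F : ℝ) * (√A.dens * (K * A.dens)) := by gcongr
    _ = _ := by ring

lemma card_lt_quadProgCount {K : ℝ}
    (hK : ∀ f₁ f₂ : F → ℂ, norm2 (fun x => bilinAvg f₁ f₂ x - expect f₁ * expect f₂) ≤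
      K * norm2 f₁ * norm2 f₂)
    {A : Finset F} (h_dens : 2 * K ≤ A.dens * √A.dens)
    (h_large : 2 < (A.dens : ℝ) ^ 2 * Fintype.card F) :
    A.card < quadProgCount A := by
  have hα : (0 : ℝ) < A.dens := by
    refine (NNRat.cast_nonneg _).lt_of_ne fun h => ?_
    rw [← h] at h_large
    norm_num at h_large
  have h_err : K * (A.dens * √A.dens) ≤ (A.dens : ℝ) ^ 3 / 2 := by
    have h_cube : (A.dens : ℝ) * √A.dens * (A.dens * √A.dens) = A.dens ^ 3 := by
      rw [mul_mul_mul_comm, Real.mul_self_sqrt hα.le]; ring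
    nlinarith [mul_le_mul_of_nonneg_right h_dens (by positivity : (0 : ℝ) ≤ A.dens * √A.dens)]
  have h_half : (A.dens : ℝ) ^ 3 / 2 ≤ quadProgCount A / (Fintype.card F : ℝ) ^ 2 := by
    linarith [(abs_le.1 (abs_quadProgCount_div_sub_dens_pow_le hK A)).1]
  have h_card : (A.card : ℝ) = A.dens * Fintype.card F := by
    rw [dens_eq_card_div_card]; push_cast; field_simp
  suffices (A.card : ℝ) < quadProgCount A by exact_mod_cast this
  rw [h_card]
  rw [le_div_iff₀ (by positivity)] at h_half
  nlinarith [mul_lt_mul_of_pos_left h_large (by positivity : (0 : ℝ) < A.dens * Fintype.card F)]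

end QuadraticProgressions

lemma le_mul_sqrt_of_rpow_le {b α : ℝ} (hb : 0 ≤ b) (h : b ^ (2 / 3 : ℝ) ≤ α) : b ≤ α * √α := by
  have hα : 0 ≤ α := (Real.rpow_nonneg hb _).trans h
  calc b = (b ^ (2 / 3 : ℝ)) ^ (3 / 2 : ℝ) := by rw [← Real.rpow_mul hb]; norm_num
    _ ≤ α ^ (3 / 2 : ℝ) := by gcongr
    _ = α * √α := by
      rw [Real.sqrt_eq_rpow, ← Real.rpow_one_add' hα (by norm_num)]; norm_num

lemma two_lt_sq_mul_of_le {α q : ℝ} (hq : 0 < q) (h : 2 * q ^ (-(1 / 2) : ℝ) ≤ α) :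
    2 < α ^ 2 * q := by
  rw [Real.rpow_neg hq.le, ← Real.sqrt_eq_rpow, ← div_eq_mul_inv,
    div_le_iff₀ (by positivity)] at h
  nlinarith [Real.sq_sqrt hq.le, Real.sqrt_nonneg q]

theorem statement2_general (δ C : ℝ) (hδ : δ < 3 / 4) (hC : 0 < C) :
    ∃ C' : ℝ, 0 < C' ∧
      ∀ (F : Type) [Field F] [Fintype F], ringChar F ≠ 2 →
        (∀ f₁ f₂ : F → ℂ,
            norm2 (fun x => bilinAvg f₁ f₂ x - expect f₁ * expect f₂) ≤
              C * (Fintype.card F : ℝ) ^ (-δ) * norm2 f₁ * norm2 f₂) →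
        ∀ A : Finset F,
          C' * (Fintype.card F : ℝ) ^ (1 - (2 / 3) * δ) ≤ (A.card : ℝ) →
          ∃ x y : F, y ≠ 0 ∧ x ∈ A ∧ x + y ∈ A ∧ x + y ^ 2 ∈ A := by
  refine ⟨(2 * C) ^ (2 / 3 : ℝ) + 2, by positivity, fun F _ _ _ hK A hA => ?_⟩
  classical
  set q : ℝ := (Fintype.card F : ℝ)
  have hq : 1 ≤ q := Nat.one_le_cast.2 Fintype.card_pos
  have h_dens : ((2 * C) ^ (2 / 3 : ℝ) + 2) * q ^ (-(2 / 3 * δ)) ≤ A.dens := by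
    rw [dens_eq_card_div_card, NNRat.cast_div, NNRat.cast_natCast, NNRat.cast_natCast,
      le_div_iff₀ (by positivity), mul_assoc, ← Real.rpow_add_one (by positivity)]
    rwa [neg_add_eq_sub]
  rw [add_mul] at h_dens
  refine exists_quadProg_of_card_lt_quadProgCount (card_lt_quadProgCount hK ?_ ?_)
  · apply le_mul_sqrt_of_rpow_le (by positivity)
    rw [← mul_assoc, Real.mul_rpow (by positivity) (by positivity), ← Real.rpow_mul (by positivity),
      show -δ * (2 / 3) = -(2 / 3 * δ) by ring]
    linarith [Real.rpow_nonneg (zero_le_one.trans hq) (-(2 / 3 * δ))]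
  · apply two_lt_sq_mul_of_le (by positivity)
    have h_rpow_le : q ^ (-(1 / 2) : ℝ) ≤ q ^ (-(2 / 3 * δ)) :=
      Real.rpow_le_rpow_of_exponent_le hq (by linarith)
    have h_pos : 0 ≤ (2 * C) ^ (2 / 3 : ℝ) * q ^ (-(2 / 3 * δ)) := by positivity
    linarith

/-- If the bilinear estimate holds with factor `q^{-δ}` (`0 < δ < 3/4`),
then there is `C'` (depending only on `C` and `δ`) such that every `A` with
`|A| ≥ C'·q^{1-(2/3)δ}` contains a nontrivial quadratic progression. -/
theorem statement2 (δ C : ℝ) (hδ₀ : 0 < δ) (hδ : δ < 3 / 4) (hC : 0 < C) :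
    ∃ C' : ℝ, 0 < C' ∧
      ∀ (F : Type) [Field F] [Fintype F], ringChar F ≠ 2 →
        (∀ f₁ f₂ : F → ℂ,
            norm2 (fun x => bilinAvg f₁ f₂ x - expect f₁ * expect f₂) ≤
              C * (Fintype.card F : ℝ) ^ (-δ) * norm2 f₁ * norm2 f₂) →
        ∀ A : Finset F,
          C' * (Fintype.card F : ℝ) ^ (1 - (2 / 3) * δ) ≤ (A.card : ℝ) →
          ∃ x y : F, y ≠ 0 ∧ x ∈ A ∧ x + y ∈ A ∧ x + y ^ 2 ∈ A :=
  statement2_general δ C hδ hC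
end

section
/- Let F_q be a finite field of odd characteristic with q elements, let e : F_q → ℂ be a nontrivial additive character, and let h ∈ F_q with h ≠ 0. For y, z ∈ F_q with y ∉ {0, −h} and z ∉ {0, −h}, define B_h(y,z) = ∑_{x ∈ F_q} e(−x²/y + (x−h)²/(y+h) + x²/z − (x−h)²/(z+h)). Then: (i) B_h(y,y) = q for every admissible y; (ii) if y ≠ z and h + y + z = 0, then B_h(y,z) = 0; (iii) if y ≠ z and h + y + z ≠ 0, then |B_h(y,z)| = q^{1/2}. -/
/-!
Expanding the squares, the phase of `B_h(y,z)` is the quadratic polynomial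
`a x² + b x + c` with `a = h (y - z) (h + y + z) / (y (y + h) z (z + h))` and
`b = 2 h (y - z) / ((y + h) (z + h))`. On the diagonal the phase vanishes; when
`h + y + z = 0` it is a non-constant affine function, whose character sum is zero; otherwise it
is a genuine quadratic, and a quadratic Gauss sum has modulus `√q`.
-/

open Finset

/-- The kernel `B_h(y,z) = ∑_x e(−x²/y + (x−h)²/(y+h) + x²/z − (x−h)²/(z+h))`. -/
noncomputable def Bker {F : Type} [Field F] [Fintype F] (e : AddChar F ℂ) (h y z : F) : ℂ :=
  ∑ x, e (-(x ^ 2) / y + (x - h) ^ 2 / (y + h) + x ^ 2 / z - (x - h) ^ 2 / (z + h))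

section CharacterSums

variable {F : Type} [Field F] [Fintype F] {e : AddChar F ℂ}

theorem AddChar.sum_affine_eq_zero (he : e ≠ 1) {b : F} (hb : b ≠ 0) (c : F) :
    ∑ x : F, e (b * x + c) = 0 := by
  have hbij : Function.Bijective fun x : F => b * x + c :=
    ((add_left_injective c).comp (mul_right_injective₀ hb)).bijective_of_finite
  rw [Fintype.sum_bijective _ hbij _ e fun _ => rfl]
  exact AddChar.sum_eq_zero_of_ne_one he

/-- Substituting `x = w + d` makes the phase of each term affine in `w`, with slope `2 a d`. -/
theorem AddChar.sum_quadratic_mul_conj (hchar : ringChar F ≠ 2) (he : e ≠ 1) {a : F}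
    (ha : a ≠ 0) (b c : F) :
    (∑ x : F, e (a * x ^ 2 + b * x + c)) * (starRingEnd ℂ) (∑ x : F, e (a * x ^ 2 + b * x + c))
      = Fintype.card F := by
  set f : F → F := fun x => a * x ^ 2 + b * x + c
  have h2a : (2 : F) * a ≠ 0 := mul_ne_zero (Ring.two_ne_zero hchar) ha
  calc (∑ x, e (f x)) * (starRingEnd ℂ) (∑ w, e (f w))
      = ∑ w, ∑ x, e (f x - f w) := by
        rw [map_sum, sum_mul_sum, sum_comm]
        refine sum_congr rfl fun w _ => sum_congr rfl fun x _ => ?_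
        rw [← AddChar.map_neg_eq_conj, ← AddChar.map_add_eq_mul, sub_eq_add_neg]
    _ = ∑ w, ∑ d, e (f (w + d) - f w) := by
        refine sum_congr rfl fun w _ => ?_
        exact (Fintype.sum_equiv (Equiv.addLeft w) _ _ fun d => rfl).symm
    _ = ∑ d, ∑ w, e (2 * a * d * w + (a * d ^ 2 + b * d)) := by
        rw [sum_comm]
        refine sum_congr rfl fun d _ => sum_congr rfl fun w _ => ?_
        congr 1
        ring
    _ = Fintype.card F := by
        rw [sum_eq_single 0]
        · simp [card_univ]
        · intro d _ hd
          exact AddChar.sum_affine_eq_zero he (mul_ne_zero h2a hd) _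
        · simp

theorem AddChar.norm_sum_quadratic (hchar : ringChar F ≠ 2) (he : e ≠ 1) {a : F} (ha : a ≠ 0)
    (b c : F) : ‖∑ x : F, e (a * x ^ 2 + b * x + c)‖ = Real.sqrt (Fintype.card F) := by
  have hsq := congrArg (‖·‖) (AddChar.sum_quadratic_mul_conj hchar he ha b c)
  simp only [norm_mul, Complex.norm_conj, Complex.norm_natCast] at hsq
  rw [← hsq, Real.sqrt_mul_self (norm_nonneg _)]

end CharacterSums

section Kernel

variable {F : Type} [Field F] [Fintype F] (e : AddChar F ℂ)

theorem Bker_self (h y : F) : Bker e h y y = Fintype.card F := by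
  have hphase (x : F) :
      -(x ^ 2) / y + (x - h) ^ 2 / (y + h) + x ^ 2 / y - (x - h) ^ 2 / (y + h) = 0 := by ring
  simp [Bker, hphase, card_univ]

theorem Bker_eq_sum_quadratic {h y z : F} (hy : y ≠ 0) (hyh : y + h ≠ 0) (hz : z ≠ 0)
    (hzh : z + h ≠ 0) :
    Bker e h y z = ∑ x : F, e (h * (y - z) * (h + y + z) / (y * (y + h) * z * (z + h)) * x ^ 2
      + 2 * h * (y - z) / ((y + h) * (z + h)) * x + h ^ 2 * (1 / (y + h) - 1 / (z + h))) := by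
  refine sum_congr rfl fun x _ => congrArg e ?_
  field_simp
  ring

end Kernel

/-- evaluation of `B_h(y,z)`: it equals `q` on the diagonal, vanishes
when `y ≠ z` and `h + y + z = 0`, and has modulus `q^{1/2}` when `y ≠ z` and
`h + y + z ≠ 0`. -/
theorem statement6 (F : Type) [Field F] [Fintype F] (hchar : ringChar F ≠ 2)
    (e : AddChar F ℂ) (he : e ≠ 1) (h : F) (hh : h ≠ 0) :
    (∀ y : F, y ≠ 0 → y + h ≠ 0 → Bker e h y y = (Fintype.card F : ℂ)) ∧
    (∀ y z : F, y ≠ 0 → y + h ≠ 0 → z ≠ 0 → z + h ≠ 0 → y ≠ z → h + y + z = 0 →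
      Bker e h y z = 0) ∧
    (∀ y z : F, y ≠ 0 → y + h ≠ 0 → z ≠ 0 → z + h ≠ 0 → y ≠ z → h + y + z ≠ 0 →
      ‖Bker e h y z‖ = Real.sqrt (Fintype.card F)) := by
  refine ⟨fun y _ _ => Bker_self e h y, ?_, ?_⟩
  · intro y z hy hyh hz hzh hyz hsum
    have hb : 2 * h * (y - z) / ((y + h) * (z + h)) ≠ 0 :=
      div_ne_zero (mul_ne_zero (mul_ne_zero (Ring.two_ne_zero hchar) hh) (sub_ne_zero.mpr hyz))
        (mul_ne_zero hyh hzh)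
    rw [Bker_eq_sum_quadratic e hy hyh hz hzh, hsum]
    simpa using AddChar.sum_affine_eq_zero he hb _
  · intro y z hy hyh hz hzh hyz hsum
    have ha : h * (y - z) * (h + y + z) / (y * (y + h) * z * (z + h)) ≠ 0 :=
      div_ne_zero (mul_ne_zero (mul_ne_zero hh (sub_ne_zero.mpr hyz)) hsum)
        (mul_ne_zero (mul_ne_zero (mul_ne_zero hy hyh) hz) hzh)
    rw [Bker_eq_sum_quadratic e hy hyh hz hzh]
    exact AddChar.norm_sum_quadratic hchar he ha _ _
end

section
/- Let F_q be a finite field of odd characteristic with q elements and let e : F_q → ℂ be a nontrivial additive character. For all f₁, f₂ : F_q → ℂ one has the identity ‖𝒜(f₁,f₂) − E[f₁]·E[f₂]‖₂ = (∑_{m ∈ F_q} |∑_{n ∈ F_q, n ≠ 0} f̂₁(m−n)·f̂₂(n)·K(m−n, n)|²)^{1/2}. -/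
open Finset

/-- The Gauss-sum kernel `K(a,b) = (1/q) ∑_y e(ay + by²)`. -/
noncomputable def Kker {F : Type} [Field F] [Fintype F] (e : AddChar F ℂ) (a b : F) : ℂ :=
  (∑ y, e (a * y + b * y ^ 2)) / (Fintype.card F : ℂ)

/-- The Fourier transform `f̂(ξ) = (1/q) ∑_x f(x) e(−xξ)`. -/
noncomputable def dft {F : Type} [Field F] [Fintype F] (e : AddChar F ℂ) (f : F → ℂ)
    (ξ : F) : ℂ :=
  (∑ x, f x * e (-(x * ξ))) / (Fintype.card F : ℂ)

namespace FiniteFieldFourier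

variable {F : Type} [Field F] [Fintype F] {e : AddChar F ℂ}

lemma sum_addChar_mul [DecidableEq F] (he : e ≠ 1) (c : F) :
    ∑ x, e (x * c) = if c = 0 then (Fintype.card F : ℂ) else 0 := by
  rw [AddChar.sum_mulShift c (AddChar.IsPrimitive.of_ne_one he), Nat.cast_ite, Nat.cast_zero]

lemma sum_dft_mul_addChar (he : e ≠ 1) (f : F → ℂ) (x : F) :
    ∑ ξ, dft e f ξ * e (x * ξ) = f x := by
  classical
  calc ∑ ξ, dft e f ξ * e (x * ξ)
      = (∑ y, f y * ∑ ξ, e (ξ * (x - y))) / Fintype.card F := by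
        simp_rw [dft, div_mul_eq_mul_div, ← sum_div, sum_mul, mul_sum, mul_assoc,
          ← AddChar.map_add_eq_mul]
        rw [sum_comm]
        refine congrArg (· / _) (sum_congr rfl fun y _ => sum_congr rfl fun ξ _ => ?_)
        ring_nf
    _ = f x := by
        simp [sum_addChar_mul he, sub_eq_zero]

lemma dft_sum_mul_addChar (he : e ≠ 1) (c : F → ℂ) (m : F) :
    dft e (fun x => ∑ ξ, c ξ * e (x * ξ)) m = c m := by
  classical
  calc dft e (fun x => ∑ ξ, c ξ * e (x * ξ)) m
      = (∑ ξ, c ξ * ∑ x, e (x * (ξ - m))) / Fintype.card F := by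
        simp_rw [dft, sum_mul, mul_sum, mul_assoc, ← AddChar.map_add_eq_mul]
        rw [sum_comm]
        refine congrArg (· / _) (sum_congr rfl fun ξ _ => sum_congr rfl fun x _ => ?_)
        ring_nf
    _ = c m := by
        simp [sum_addChar_mul he, sub_eq_zero]

lemma sum_norm_sq_dft (he : e ≠ 1) (f : F → ℂ) :
    ∑ ξ, ‖dft e f ξ‖ ^ 2 = (∑ x, ‖f x‖ ^ 2) / Fintype.card F := by
  have conj_dft : ∀ ξ, starRingEnd ℂ (dft e f ξ)
      = (∑ x, starRingEnd ℂ (f x) * e (x * ξ)) / Fintype.card F := fun ξ => by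
    simp [dft, AddChar.map_neg_eq_conj]
  apply Complex.ofReal_injective
  push_cast
  calc ∑ ξ, (‖dft e f ξ‖ : ℂ) ^ 2
      = ∑ ξ, dft e f ξ * starRingEnd ℂ (dft e f ξ) := by simp [Complex.mul_conj']
    _ = (∑ x, starRingEnd ℂ (f x) * ∑ ξ, dft e f ξ * e (x * ξ)) / Fintype.card F := by
        simp_rw [conj_dft, mul_div_assoc', ← sum_div, mul_sum]
        rw [sum_comm]
        refine congrArg (· / _) (sum_congr rfl fun x _ => sum_congr rfl fun ξ _ => ?_)
        ring
    _ = (∑ x, (‖f x‖ : ℂ) ^ 2) / Fintype.card F := by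
        simp [sum_dft_mul_addChar he, Complex.mul_conj', mul_comm]

lemma Kker_zero_right [DecidableEq F] (he : e ≠ 1) (a : F) :
    Kker e a 0 = if a = 0 then 1 else 0 := by
  simp [Kker, mul_comm a, sum_addChar_mul he, ite_div]

lemma dft_zero (f : F → ℂ) : dft e f 0 = expect f := by
  simp [dft, _root_.expect]

lemma bilinAvg_eq_sum_mul_addChar (he : e ≠ 1) (f₁ f₂ : F → ℂ) (x : F) :
    bilinAvg f₁ f₂ x
      = ∑ m, (∑ n, dft e f₁ (m - n) * dft e f₂ n * Kker e (m - n) n) * e (x * m) := by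
  have expand : ∀ y, f₁ (x + y) * f₂ (x + y ^ 2) = ∑ a, ∑ b,
      dft e f₁ a * dft e f₂ b * e (x * (a + b)) * e (a * y + b * y ^ 2) := fun y => by
    rw [← sum_dft_mul_addChar he f₁, ← sum_dft_mul_addChar he f₂, sum_mul_sum]
    refine sum_congr rfl fun a _ => sum_congr rfl fun b _ => ?_
    calc _ = dft e f₁ a * dft e f₂ b * e ((x + y) * a + (x + y ^ 2) * b) := by
            rw [AddChar.map_add_eq_mul]; ring
      _ = _ := by rw [mul_assoc (dft e f₁ a * dft e f₂ b), ← AddChar.map_add_eq_mul]; ring_nf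
  calc bilinAvg f₁ f₂ x
      = ∑ a, ∑ b, dft e f₁ a * dft e f₂ b * Kker e a b * e (x * (a + b)) := by
        simp_rw [bilinAvg, expand]
        rw [sum_comm, sum_div]
        refine sum_congr rfl fun a _ => ?_
        rw [sum_comm, sum_div]
        refine sum_congr rfl fun b _ => ?_
        rw [← mul_sum, Kker]
        ring
    _ = ∑ n, ∑ m, dft e f₁ (m - n) * dft e f₂ n * Kker e (m - n) n * e (x * m) := by
        rw [sum_comm]
        exact sum_congr rfl fun n _ => Fintype.sum_equiv (Equiv.addRight n) _ _ fun a => by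
          simp
    _ = _ := by
        simp_rw [sum_mul]
        exact sum_comm

lemma bilinAvg_sub_expect_mul_expect [DecidableEq F] (he : e ≠ 1) (f₁ f₂ : F → ℂ) (x : F) :
    bilinAvg f₁ f₂ x - expect f₁ * expect f₂
      = ∑ m, (∑ n ∈ univ.filter (fun n : F => n ≠ 0),
          dft e f₁ (m - n) * dft e f₂ n * Kker e (m - n) n) * e (x * m) := by
  have zero_frequency : ∑ m, dft e f₁ m * dft e f₂ 0 * Kker e m 0 * e (x * m)
      = expect f₁ * expect f₂ := by
    simp [Kker_zero_right he, dft_zero]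
  rw [bilinAvg_eq_sum_mul_addChar he, ← zero_frequency, ← sum_sub_distrib]
  refine sum_congr rfl fun m _ => ?_
  rw [filter_ne', ← add_sum_erase _ _ (mem_univ 0)]
  simp only [sub_zero]
  ring

end FiniteFieldFourier

theorem statement10_general (F : Type) [Field F] [Fintype F] [DecidableEq F]
    (e : AddChar F ℂ) (he : e ≠ 1) (f₁ f₂ : F → ℂ) :
    norm2 (fun x => bilinAvg f₁ f₂ x - expect f₁ * expect f₂) =
      Real.sqrt (∑ m, ‖∑ n ∈ Finset.univ.filter (fun n : F => n ≠ 0),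
          dft e f₁ (m - n) * dft e f₂ n * Kker e (m - n) n‖ ^ 2) := by
  rw [norm2, ← FiniteFieldFourier.sum_norm_sq_dft he]
  congr 1
  refine sum_congr rfl fun m _ => ?_
  simp_rw [FiniteFieldFourier.bilinAvg_sub_expect_mul_expect he,
    FiniteFieldFourier.dft_sum_mul_addChar he]

/-- the Parseval identity
`‖𝒜(f₁,f₂) − E[f₁]E[f₂]‖₂ = (∑_m |∑_{n ≠ 0} f̂₁(m−n) f̂₂(n) K(m−n,n)|²)^{1/2}`. -/
theorem statement10 (F : Type) [Field F] [Fintype F] [DecidableEq F]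
    (hchar : ringChar F ≠ 2) (e : AddChar F ℂ) (he : e ≠ 1) (f₁ f₂ : F → ℂ) :
    norm2 (fun x => bilinAvg f₁ f₂ x - expect f₁ * expect f₂) =
      Real.sqrt (∑ m, ‖∑ n ∈ Finset.univ.filter (fun n : F => n ≠ 0),
          dft e f₁ (m - n) * dft e f₂ n * Kker e (m - n) n‖ ^ 2) :=
  statement10_general F e he f₁ f₂
end

section
/- There is an absolute constant c > 0 such that for every finite field F_q of odd characteristic with q elements, there exists a subset A ⊆ F_q with |A| ≥ c·q^{1/2} containing no nontrivial quadratic progression; that is, there are no x ∈ F_q and y ≠ 0 with x, x+y, x+y² all in A. -/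
/-!
Dilating a set `B` by `l ≠ 0` turns a progression `l b₀, l b₁, l b₂` with common difference
`y = l (b₁ - b₀)` and `y ^ 2 = l (b₂ - b₀)` into the relation `l = (b₂ - b₀) / (b₁ - b₀) ^ 2`.
So if `|B - B| ^ 2 + 1 < q`, some nonzero `l` avoids all these quotients and `l • B` contains no
nontrivial quadratic progression. A set of size `≍ √q` with `|B - B| ≍ |B|` is a box in
`𝔽_q ≅ 𝔽_p ^ n`: a full `𝔽_p`-subspace of dimension `⌊(n - 1) / 2⌋` times an interval
`{0, …, M - 1}` in one extra coordinate, with `M ≍ √p` or `M ≍ p / 2` according to the parity of `n`.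
-/

open Finset Module
open scoped Pointwise

def QuadProgFree {F : Type*} [Semiring F] (A : Finset F) : Prop :=
  ¬ ∃ x y : F, y ≠ 0 ∧ x ∈ A ∧ x + y ∈ A ∧ x + y ^ 2 ∈ A

section Dilation

variable {F : Type*} [Field F]

lemma eq_div_sq_of_mul_eq_add {l b₀ b₁ b₂ y : F} (hy : y ≠ 0)
    (h₁ : l * b₁ = l * b₀ + y) (h₂ : l * b₂ = l * b₀ + y ^ 2) :
    l = (b₂ - b₀) / (b₁ - b₀) ^ 2 := by
  have hy' : y = l * (b₁ - b₀) := by linear_combination -h₁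
  have hl : l ≠ 0 := by rintro rfl; simp_all
  have hb : b₁ - b₀ ≠ 0 := by rintro h; simp_all
  rw [eq_div_iff (pow_ne_zero 2 hb)]
  refine mul_left_cancel₀ hl ?_
  linear_combination -h₂ - (y + l * (b₁ - b₀)) * hy'

variable [Fintype F] [DecidableEq F]

theorem exists_ne_zero_quadProgFree_smul (B : Finset F)
    (hB : #(B - B) ^ 2 + 1 < Fintype.card F) : ∃ l : F, l ≠ 0 ∧ QuadProgFree (l • B) := by
  set bad := image₂ (fun d e => e / d ^ 2) (B - B) (B - B)
  have hbad : #(insert 0 bad) < #(univ : Finset F) := by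
    calc #(insert 0 bad) ≤ #bad + 1 := card_insert_le _ _
      _ ≤ #(B - B) * #(B - B) + 1 := by gcongr; exact card_image₂_le _ _ _
      _ < #(univ : Finset F) := by rw [card_univ, ← sq]; exact hB
  obtain ⟨l, -, hl⟩ := exists_mem_notMem_of_card_lt_card hbad
  rw [mem_insert, not_or] at hl
  refine ⟨l, hl.1, ?_⟩
  rintro ⟨x, y, hy, hx, hxy, hxy2⟩
  obtain ⟨b₀, hb₀, rfl⟩ := mem_smul_finset.1 hx
  obtain ⟨b₁, hb₁, h₁⟩ := mem_smul_finset.1 hxy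
  obtain ⟨b₂, hb₂, h₂⟩ := mem_smul_finset.1 hxy2
  exact hl.2 <| mem_image₂.2 ⟨b₁ - b₀, sub_mem_sub hb₁ hb₀, b₂ - b₀, sub_mem_sub hb₂ hb₀,
    (eq_div_sq_of_mul_eq_add hy h₁ h₂).symm⟩

end Dilation

theorem exists_card_eq_card_sub_le_of_lt_finrank {K V : Type*} [Field K] [Fintype K]
    [DecidableEq K] [AddCommGroup V] [Module K V] [FiniteDimensional K V] [DecidableEq V]
    (I : Finset K) {k : ℕ} (hk : k < finrank K V) :
    ∃ B : Finset V, #B = #I * Fintype.card K ^ k ∧ #(B - B) ≤ #(I - I) * Fintype.card K ^ k := by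
  obtain ⟨φ, hφ⟩ : ∃ φ : (K × (Fin k → K)) →ₗ[K] V, Function.Injective φ :=
    finrank_le_iff_exists_linearMap.1 (by simpa [add_comm] using hk)
  refine ⟨(I ×ˢ univ).image φ, by simp [card_image_of_injective _ hφ], ?_⟩
  have hsub : (I ×ˢ univ).image φ - (I ×ˢ univ).image φ ⊆ ((I - I) ×ˢ univ).image φ := by
    intro x hx
    obtain ⟨_, ha, _, hb, rfl⟩ := mem_sub.1 hx
    obtain ⟨⟨a, u⟩, ha', rfl⟩ := mem_image.1 ha
    obtain ⟨⟨b, v⟩, hb', rfl⟩ := mem_image.1 hb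
    exact mem_image.2 ⟨(a, u) - (b, v), mem_product.2
      ⟨sub_mem_sub (mem_product.1 ha').1 (mem_product.1 hb').1, mem_univ _⟩, map_sub φ _ _⟩
  calc #((I ×ˢ univ).image φ - (I ×ˢ univ).image φ) ≤ #(((I - I) ×ˢ univ).image φ) :=
        card_le_card hsub
    _ ≤ #(I - I) * Fintype.card K ^ k := card_image_le.trans (by simp)

lemma card_image_natCast_range {p M : ℕ} [NeZero p] (hM : M ≤ p) :
    #((range M).image (Nat.cast : ℕ → ZMod p)) = M := by
  rw [card_image_of_injOn, card_range]
  intro a ha b hb hab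
  rw [ZMod.natCast_eq_natCast_iff' a b p] at hab
  simp only [coe_range, Set.mem_Iio] at ha hb
  rwa [Nat.mod_eq_of_lt (ha.trans_le hM), Nat.mod_eq_of_lt (hb.trans_le hM)] at hab

lemma card_image_natCast_range_sub_le (R : Type*) [AddGroupWithOne R] [DecidableEq R] (M : ℕ) :
    #((range M).image (Nat.cast : ℕ → R) - (range M).image Nat.cast) ≤ 2 * M - 1 := by
  have hsub : (range M).image (Nat.cast : ℕ → R) - (range M).image Nat.cast ⊆
      (Ioo (-M : ℤ) M).image Int.cast := by
    intro x hx
    obtain ⟨_, ha, _, hb, rfl⟩ := mem_sub.1 hx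
    obtain ⟨a, ha', rfl⟩ := mem_image.1 ha
    obtain ⟨b, hb', rfl⟩ := mem_image.1 hb
    rw [mem_range] at ha' hb'
    exact mem_image.2 ⟨a - b, mem_Ioo.2 ⟨by omega, by omega⟩, by push_cast; rfl⟩
  refine (card_le_card hsub).trans (card_image_le.trans ?_)
  rw [Int.card_Ioo]
  omega

lemma exists_sub_one_sq_add_two_le_le_sixteen_mul_sq {Q : ℕ} (hQ : 3 ≤ Q) :
    ∃ M : ℕ, (2 * M - 1) ^ 2 + 2 ≤ Q ∧ Q ≤ 16 * M ^ 2 := by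
  set s := Nat.sqrt (Q - 2)
  have hs_le : s ^ 2 ≤ Q - 2 := Nat.sqrt_le' _
  have hs_lt : Q - 2 < (s + 1) ^ 2 := Nat.lt_succ_sqrt' _
  have hs : 0 < s := Nat.sqrt_pos.2 (by omega)
  refine ⟨(s + 1) / 2, ?_, ?_⟩
  · have : 2 * ((s + 1) / 2) - 1 ≤ s := by omega
    have := Nat.pow_le_pow_left this 2
    omega
  · have hQ_le : Q ≤ (s + 1) ^ 2 + 1 := by omega
    have hsM : s ≤ 2 * ((s + 1) / 2) := by omega
    have hM : 1 ≤ (s + 1) / 2 := by omega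
    generalize (s + 1) / 2 = M at hsM hM ⊢
    nlinarith

lemma exists_box_shape {p n : ℕ} (hp : 3 ≤ p) (hn : 1 ≤ n) :
    ∃ k M : ℕ, k < n ∧ M ≤ p ∧ ((2 * M - 1) * p ^ k) ^ 2 + 1 < p ^ n ∧
      p ^ n ≤ 16 * (M * p ^ k) ^ 2 := by
  set k := (n - 1) / 2
  set Q := p ^ (n - 2 * k)
  have hpn : p ^ n = Q * (p ^ k) ^ 2 := by rw [← pow_mul, ← pow_add]; congr 1; omega
  have hQ_ge : 3 ≤ Q := hp.trans (Nat.le_self_pow (by omega) p)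
  have hQ_le : Q ≤ p ^ 2 := Nat.pow_le_pow_right (by omega) (by omega)
  have hP : 1 ≤ (p ^ k) ^ 2 := Nat.one_le_pow _ _ (by positivity)
  obtain ⟨M, hM_small, hM_large⟩ := exists_sub_one_sq_add_two_le_le_sixteen_mul_sq hQ_ge
  refine ⟨k, M, by omega, ?_, ?_, ?_⟩
  · by_contra! h
    have := Nat.pow_le_pow_left (show p ≤ 2 * M - 1 by omega) 2
    omega
  · rw [hpn, mul_pow]
    nlinarith
  · rw [hpn, mul_pow, ← mul_assoc]
    exact Nat.mul_le_mul_right _ hM_large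

theorem exists_quadProgFree_card_le_sixteen_mul_sq (F : Type*) [Field F] [Fintype F]
    (hF : ringChar F ≠ 2) : ∃ A : Finset F, QuadProgFree A ∧ Fintype.card F ≤ 16 * #A ^ 2 := by
  classical
  set p := ringChar F
  have : Fact p.Prime := ⟨CharP.char_is_prime F p⟩
  let _ : Algebra (ZMod p) F := ZMod.algebra F p
  set n := finrank (ZMod p) F
  have hq : Fintype.card F = p ^ n := by rw [card_eq_pow_finrank (K := ZMod p), ZMod.card]
  have hp : 3 ≤ p := by have := (Fact.out : p.Prime).two_le; omega
  obtain ⟨k, M, hk, hMp, hsmall, hlarge⟩ := exists_box_shape hp (finrank_pos (R := ZMod p) (M := F))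
  obtain ⟨B, hB, hBB⟩ := exists_card_eq_card_sub_le_of_lt_finrank (K := ZMod p) (V := F)
    ((range M).image (Nat.cast : ℕ → ZMod p)) hk
  rw [card_image_natCast_range hMp, ZMod.card] at hB
  rw [ZMod.card] at hBB
  have hBB' : #(B - B) ≤ (2 * M - 1) * p ^ k :=
    hBB.trans (Nat.mul_le_mul_right _ (card_image_natCast_range_sub_le _ M))
  obtain ⟨l, hl, hfree⟩ := exists_ne_zero_quadProgFree_smul B (by
    rw [hq]; exact lt_of_le_of_lt (by gcongr) hsmall)
  exact ⟨l • B, hfree, by rw [card_smul_finset₀ hl, hB, hq]; exact hlarge⟩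

/-- there is an absolute constant `c > 0` such that every finite field
of odd characteristic contains a subset `A` with `|A| ≥ c·q^{1/2}` and no nontrivial
quadratic progression. -/
theorem statement11 :
    ∃ c : ℝ, 0 < c ∧
      ∀ (F : Type) [Field F] [Fintype F], ringChar F ≠ 2 →
        ∃ A : Finset F,
          c * Real.sqrt (Fintype.card F) ≤ (A.card : ℝ) ∧
          ¬ ∃ x y : F, y ≠ 0 ∧ x ∈ A ∧ x + y ∈ A ∧ x + y ^ 2 ∈ A := by
  refine ⟨1 / 4, by norm_num, fun F _ _ hF => ?_⟩
  obtain ⟨A, hfree, hcard⟩ := exists_quadProgFree_card_le_sixteen_mul_sq F hF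
  refine ⟨A, ?_, hfree⟩
  have : Real.sqrt (Fintype.card F) ≤ 4 * #A := by
    rw [Real.sqrt_le_left (by positivity)]
    exact_mod_cast (by linarith : Fintype.card F ≤ (4 * #A) ^ 2)
  linarith
end

section
/- Let F be a finite field with q elements of odd characteristic, let K be a field extension of F of degree 2, and let ω ∈ K satisfy ω² ∈ F and ω ∉ F. Let L = {ω·a : a ∈ F} ⊆ K. Then |L| = q = |K|^{1/2}, and L contains no nontrivial quadratic progression: there are no x ∈ K and y ∈ K with y ≠ 0 such that x, x+y, x+y² all lie in L. -/
/-- The `F`-line `L = {ω·a : a ∈ F}` inside `K`. -/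
def lineSet (F : Type) {K : Type} [CommSemiring F] [CommSemiring K] [Algebra F K]
    (ω : K) : Set K :=
  Set.range fun a : F => ω * algebraMap F K a

/-!
Writing `x = ωa`, `x + y = ωb`, `x + y² = ωc`, the step `y = ω(b - a)` has square
`ω²(b - a)² ∈ F`, while `y² = ω(c - a)` lies on the line `ωF`. Since `ω ∉ F`, the only
element of `F` on that line is `0`, so `y = 0`.
-/

section lineSet

variable {F K : Type}

theorem sub_mem_lineSet [CommRing F] [CommRing K] [Algebra F K] {ω x z : K}
    (hx : x ∈ lineSet F ω) (hz : z ∈ lineSet F ω) : z - x ∈ lineSet F ω := by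
  obtain ⟨a, rfl⟩ := hx
  obtain ⟨c, rfl⟩ := hz
  exact ⟨c - a, by simp only [map_sub, mul_sub]⟩

theorem sq_mem_range_of_mem_lineSet [CommSemiring F] [CommSemiring K] [Algebra F K]
    {ω y : K} (hω2 : ω ^ 2 ∈ Set.range (algebraMap F K)) (hy : y ∈ lineSet F ω) :
    y ^ 2 ∈ Set.range (algebraMap F K) := by
  obtain ⟨s, hs⟩ := hω2
  obtain ⟨b, rfl⟩ := hy
  exact ⟨s * b ^ 2, by rw [map_mul, map_pow, hs, mul_pow]⟩

theorem eq_zero_of_mem_range_of_mem_lineSet [Field F] [Field K] [Algebra F K] {ω z : K}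
    (hω : ω ∉ Set.range (algebraMap F K)) (hzF : z ∈ Set.range (algebraMap F K))
    (hzL : z ∈ lineSet F ω) : z = 0 := by
  obtain ⟨t, rfl⟩ := hzF
  obtain ⟨c, hc : ω * algebraMap F K c = algebraMap F K t⟩ := hzL
  by_contra ht
  have hc0 : algebraMap F K c ≠ 0 := by
    rintro h
    rw [h, mul_zero] at hc
    exact ht hc.symm
  exact hω ⟨t * c⁻¹, by rw [map_mul, map_inv₀, ← hc, mul_inv_cancel_right₀ hc0]⟩

theorem card_lineSet [Field F] [Field K] [Algebra F K] {ω : K} (hω : ω ≠ 0) :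
    Nat.card (lineSet F ω) = Nat.card F :=
  Nat.card_range_of_injective fun _ _ h =>
    (algebraMap F K).injective (mul_left_cancel₀ hω h)

theorem eq_zero_of_quadratic_progression_mem_lineSet [Field F] [Field K] [Algebra F K]
    {ω x y : K} (hω2 : ω ^ 2 ∈ Set.range (algebraMap F K))
    (hω : ω ∉ Set.range (algebraMap F K)) (hx : x ∈ lineSet F ω)
    (hxy : x + y ∈ lineSet F ω) (hxy2 : x + y ^ 2 ∈ lineSet F ω) : y = 0 := by
  have hyL : y ∈ lineSet F ω := by simpa using sub_mem_lineSet hx hxy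
  have hy2L : y ^ 2 ∈ lineSet F ω := by simpa using sub_mem_lineSet hx hxy2
  exact pow_eq_zero_iff two_ne_zero |>.mp <|
    eq_zero_of_mem_range_of_mem_lineSet hω (sq_mem_range_of_mem_lineSet hω2 hyL) hy2L

end lineSet

theorem statement12_general (F K : Type) [Field F] [Fintype F] [Field K] [Fintype K]
    [Algebra F K] (hrank : Module.finrank F K = 2)
    (ω : K) (hω2 : ω ^ 2 ∈ Set.range (algebraMap F K))
    (hω : ω ∉ Set.range (algebraMap F K)) :
    Nat.card (lineSet F ω) = Fintype.card F ∧
    (Fintype.card F : ℝ) = Real.sqrt (Fintype.card K) ∧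
    ¬ ∃ x y : K, y ≠ 0 ∧ x ∈ lineSet F ω ∧ x + y ∈ lineSet F ω ∧
        x + y ^ 2 ∈ lineSet F ω := by
  have hω0 : ω ≠ 0 := fun h => hω ⟨0, by rw [map_zero, h]⟩
  refine ⟨by rw [card_lineSet hω0, Nat.card_eq_fintype_card], ?_, ?_⟩
  · rw [Module.card_eq_pow_finrank (K := F) (V := K), hrank, Nat.cast_pow,
      Real.sqrt_sq (Nat.cast_nonneg _)]
  · rintro ⟨x, y, hy, hx, hxy, hxy2⟩
    exact hy (eq_zero_of_quadratic_progression_mem_lineSet hω2 hω hx hxy hxy2)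

/-- if `K/F` is a quadratic extension of finite fields of odd
characteristic and `ω ∈ K` satisfies `ω² ∈ F`, `ω ∉ F`, then the line
`L = ωF` has `|L| = q = |K|^{1/2}` and contains no nontrivial quadratic progression. -/
theorem statement12 (F K : Type) [Field F] [Fintype F] [Field K] [Fintype K]
    [Algebra F K] (hchar : ringChar F ≠ 2) (hrank : Module.finrank F K = 2)
    (ω : K) (hω2 : ω ^ 2 ∈ Set.range (algebraMap F K))
    (hω : ω ∉ Set.range (algebraMap F K)) :
    Nat.card (lineSet F ω) = Fintype.card F ∧
    (Fintype.card F : ℝ) = Real.sqrt (Fintype.card K) ∧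
    ¬ ∃ x y : K, y ≠ 0 ∧ x ∈ lineSet F ω ∧ x + y ∈ lineSet F ω ∧
        x + y ^ 2 ∈ lineSet F ω :=
  statement12_general F K hrank ω hω2 hω
end

section
/- Let F = F_q be a finite field of odd order q and let K be a field extension of F of degree 3. Then there exists a two-dimensional F-linear subspace V ⊆ K such that for all y ∈ K, if y ∈ V and y² ∈ V then y = 0. Consequently |V| = q² = |K|^{2/3} and V contains no nontrivial quadratic progression: there are no x ∈ K and y ≠ 0 with x, x+y, x+y² all in V. -/
/-!
Take `V = ker φ` with `φ 1 = 1`. For `y ∉ F` the powers `1, y, y²` form a basis of `K`, so at most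
one such `φ` kills both `y` and `y²`: the sets of nonzero "bad" `y` of the `q²` normalized
functionals are disjoint subsets of `K ∖ {0}`. If `y ≠ 0` is bad for `φ`, then `φ (y³) ≠ 0`
(otherwise `φ` would vanish on `y K = K`), and since `q` is odd `z = y² - t y` is bad for a
suitable `t`; the nonzero multiples of `y` and of `z` give `2 (q - 1)` bad elements. If every `φ`
were bad, `2 q² (q - 1) ≤ q³ - 1`, which fails for `q ≥ 2`.
-/

open Module Finset

theorem two_mul_card_sub_one_le_card_of_linearIndependent {F V : Type*} [Field F] [Fintype F]
    [AddCommGroup V] [Module F V] {S : Finset V}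
    (hS : ∀ c : F, c ≠ 0 → ∀ v ∈ S, c • v ∈ S) {y z : V} (hy : y ∈ S) (hz : z ∈ S)
    (hyz : LinearIndependent F ![y, z]) : 2 * (Fintype.card F - 1) ≤ #S := by
  classical
  have hli := LinearIndependent.pair_iff.mp hyz
  let f : Fˣ ⊕ Fˣ → V := Sum.elim (fun u => (u : F) • y) (fun u => (u : F) • z)
  have hf : Function.Injective f := by
    rintro (u | u) (v | v) huv <;> simp only [f, Sum.elim_inl, Sum.elim_inr] at huv
    · exact congrArg _ (Units.ext (sub_eq_zero.mp (hli (u - v) 0 (by simp [sub_smul, huv])).1))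
    · simpa using (hli u (-v) (by simp [huv])).1
    · simpa using (hli (-v) u (by simp [huv])).1
    · exact congrArg _ (Units.ext (sub_eq_zero.mp (hli 0 (u - v) (by simp [sub_smul, huv])).2))
  calc 2 * (Fintype.card F - 1) = #(univ : Finset (Fˣ ⊕ Fˣ)) := by
        simp [Fintype.card_units, two_mul]
    _ ≤ #S := card_le_card_of_injOn f (by
        rintro (u | u) - <;> exact hS _ u.ne_zero _ ‹_›) hf.injOn

theorem Module.Dual.natCard_apply_eq_one {F V : Type*} [Field F] [Finite F] [AddCommGroup V]
    [Module F V] [FiniteDimensional F V] {v : V} (hv : v ≠ 0) :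
    Nat.card {φ : Dual F V // φ v = 1} = Nat.card F ^ (finrank F V - 1) := by
  obtain ⟨φ₀, hφ₀⟩ := Projective.exists_dual_eq_one F hv
  have hne : Dual.eval F V v ≠ 0 := fun h => by simpa [hφ₀] using LinearMap.congr_fun h φ₀
  have hker := Dual.finrank_ker_add_one_of_ne_zero hne
  rw [Subspace.dual_finrank_eq] at hker
  have e : {φ : Dual F V // φ v = 1} ≃ LinearMap.ker (Dual.eval F V v) :=
    (Equiv.subRight φ₀).subtypeEquiv fun φ => by simp [hφ₀, sub_eq_zero]
  rw [Nat.card_congr e, natCard_eq_pow_finrank (K := F)]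
  congr 1
  omega

section CubicExtension

variable {F K : Type*} [Field F] [Field K] [Algebra F K]

theorem linearIndependent_pow_of_finrank_eq_three (hrank : finrank F K = 3) {y : K}
    (hy : y ∉ Set.range (algebraMap F K)) :
    LinearIndependent F fun i : Fin 3 => y ^ (i : ℕ) := by
  have : FiniteDimensional F K := .of_finrank_pos (by omega)
  have hdeg : (minpoly F y).natDegree = 3 := by
    have hdvd := minpoly.degree_dvd (IsIntegral.of_finite F y)
    rw [hrank] at hdvd
    refine ((Nat.dvd_prime Nat.prime_three).mp hdvd).resolve_left fun h => hy ?_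
    exact minpoly.natDegree_eq_one_iff.mp h
  exact hdeg ▸ linearIndependent_pow y

theorem span_range_pow_eq_top_of_finrank_eq_three (hrank : finrank F K = 3) {y : K}
    (hy : y ∉ Set.range (algebraMap F K)) :
    Submodule.span F (Set.range fun i : Fin 3 => y ^ (i : ℕ)) = ⊤ :=
  (linearIndependent_pow_of_finrank_eq_three hrank hy).span_eq_top_of_card_eq_finrank
    (by simp [hrank])

theorem Module.Dual.notMem_range_algebraMap {φ : Dual F K} (hφ : φ 1 = 1) {y : K}
    (hy0 : y ≠ 0) (hy : φ y = 0) : y ∉ Set.range (algebraMap F K) := by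
  rintro ⟨a, rfl⟩
  rw [Algebra.algebraMap_eq_smul_one, map_smul, hφ, smul_eq_mul, mul_one] at hy
  simp [hy] at hy0

theorem Module.Dual.apply_pow_three_ne_zero (hrank : finrank F K = 3) {φ : Dual F K}
    (hφ : φ 1 = 1) {y : K} (hy0 : y ≠ 0) (hy : φ y = 0) (hy2 : φ (y ^ 2) = 0) :
    φ (y ^ 3) ≠ 0 := by
  intro hy3
  have hmul : φ ∘ₗ LinearMap.mulLeft F y = 0 := by
    refine LinearMap.ext_on_range (span_range_pow_eq_top_of_finrank_eq_three hrank
      (φ.notMem_range_algebraMap hφ hy0 hy)) fun i => ?_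
    fin_cases i <;> simp [← sq, ← pow_succ', hy, hy2, hy3]
  simpa [hy0, hφ] using LinearMap.congr_fun hmul y⁻¹

theorem Module.Dual.exists_linearIndependent_of_apply_eq_zero (h2 : (2 : F) ≠ 0)
    (hrank : finrank F K = 3) {φ : Dual F K} (hφ : φ 1 = 1) {y : K} (hy0 : y ≠ 0)
    (hy : φ y = 0) (hy2 : φ (y ^ 2) = 0) :
    ∃ z : K, φ z = 0 ∧ φ (z ^ 2) = 0 ∧ LinearIndependent F ![y, z] := by
  have hc := φ.apply_pow_three_ne_zero hrank hφ hy0 hy hy2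
  -- `t` is chosen so that the `y⁴` and `y³` terms of `φ (z ^ 2)` cancel
  set t := φ (y ^ 4) / (2 * φ (y ^ 3))
  refine ⟨y ^ 2 - t • y, by simp [hy, hy2], ?_, ?_⟩
  · have hz2 : (y ^ 2 - t • y) ^ 2 = y ^ 4 - (2 * t) • y ^ 3 + t ^ 2 • y ^ 2 := by
      simp only [Algebra.smul_def, map_mul, map_pow, map_ofNat]
      ring
    rw [hz2]
    simp only [map_add, map_sub, map_smul, hy2, smul_eq_mul, mul_zero, add_zero, t]
    field_simp
    ring
  · refine LinearIndependent.pair_iff.mpr fun s r hsr => ?_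
    have hcoeff := Fintype.linearIndependent_iff.mp
      (linearIndependent_pow_of_finrank_eq_three hrank (φ.notMem_range_algebraMap hφ hy0 hy))
      ![0, s - r * t, r] (by
        rw [← hsr, Fin.sum_univ_three]
        simp only [Matrix.cons_val, Fin.val_zero, Fin.val_one, Fin.val_two, zero_smul,
          pow_one, sub_smul, smul_sub, mul_smul]
        abel)
    have hr : r = 0 := by simpa using hcoeff 2
    have hs : s - r * t = 0 := by simpa using hcoeff 1
    exact ⟨by simpa [hr] using hs, hr⟩

end CubicExtension

theorem exists_dual_apply_one_forall_eq_zero {F K : Type*} [Field F] [Fintype F] [Field K]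
    [Finite K] [Algebra F K] (h2 : (2 : F) ≠ 0) (hrank : finrank F K = 3) :
    ∃ φ : Dual F K, φ 1 = 1 ∧ ∀ y, φ y = 0 → φ (y ^ 2) = 0 → y = 0 := by
  classical
  have : FiniteDimensional F K := .of_finrank_pos (by omega)
  have := Fintype.ofFinite K
  have := @Fintype.ofFinite (Dual F K) (Module.finite_of_finite F)
  by_contra! hbad
  set q := Fintype.card F
  let D : Finset (Dual F K) := {φ | φ 1 = 1}
  let W (φ : Dual F K) : Finset K := {y | y ≠ 0 ∧ φ y = 0 ∧ φ (y ^ 2) = 0}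
  have hD : #D = q ^ 2 := by
    rw [← Fintype.card_subtype, ← Nat.card_eq_fintype_card, Dual.natCard_apply_eq_one one_ne_zero,
      hrank, Nat.card_eq_fintype_card]
  have hW : ∀ φ ∈ D, 2 * (q - 1) ≤ #(W φ) := by
    intro φ hφ
    replace hφ : φ 1 = 1 := (mem_filter.mp hφ).2
    obtain ⟨y, hy, hy2, hy0⟩ := hbad φ hφ
    obtain ⟨z, hz, hz2, hyz⟩ := φ.exists_linearIndependent_of_apply_eq_zero h2 hrank hφ hy0 hy hy2
    have hz0 : z ≠ 0 := by simpa using hyz.ne_zero 1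
    refine two_mul_card_sub_one_le_card_of_linearIndependent (fun c hc v hv => ?_)
      (by simp [W, hy0, hy, hy2]) (by simp [W, hz0, hz, hz2]) hyz
    simp only [W, mem_filter, mem_univ, true_and] at hv ⊢
    exact ⟨smul_ne_zero hc hv.1, by simp [hv.2.1], by simp [smul_pow, hv.2.2]⟩
  -- for `y ∉ F`, a functional is determined by its values on the basis `1, y, y²`
  have hdisj : (D : Set (Dual F K)).PairwiseDisjoint W := by
    intro φ hφ ψ hψ hne
    refine disjoint_left.mpr fun y hyφ hyψ => hne ?_
    simp only [D, W, coe_filter, Set.mem_ofPred_eq, mem_filter, mem_univ, true_and] at *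
    refine LinearMap.ext_on_range (span_range_pow_eq_top_of_finrank_eq_three hrank
      (φ.notMem_range_algebraMap hφ hyφ.1 hyφ.2.1)) fun i => ?_
    fin_cases i <;> simp [hφ, hψ, hyφ, hyψ]
  have hcover : D.biUnion W ⊆ univ.erase 0 := by
    intro y hy
    obtain ⟨φ, -, hy⟩ := mem_biUnion.mp hy
    exact mem_erase.mpr ⟨(mem_filter.mp hy).2.1, mem_univ y⟩
  have hcount : q ^ 2 * (2 * (q - 1)) ≤ q ^ 3 - 1 :=
    calc q ^ 2 * (2 * (q - 1)) ≤ ∑ φ ∈ D, #(W φ) := hD ▸ card_nsmul_le_sum D _ _ hW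
      _ = #(D.biUnion W) := (card_biUnion hdisj).symm
      _ ≤ #(univ.erase (0 : K)) := card_le_card hcover
      _ = q ^ 3 - 1 := by
        rw [card_erase_of_mem (mem_univ 0), card_univ, card_eq_pow_finrank (K := F), hrank]
  have hq : 2 ≤ q := Fintype.one_lt_card
  have hq3 : 1 ≤ q ^ 3 := Nat.one_le_pow _ _ (by omega)
  zify [hq3, (show 1 ≤ q by omega)] at hcount
  nlinarith

/-- in a cubic extension `K` of a finite field `F` of odd order `q`,
there is a two-dimensional `F`-linear subspace `V ⊆ K` such that `y ∈ V` and
`y² ∈ V` force `y = 0`; consequently `|V| = q² = |K|^{2/3}` and `V` contains no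
nontrivial quadratic progression. -/
theorem statement13 (F K : Type) [Field F] [Fintype F] [Field K] [Fintype K]
    [Algebra F K] (hchar : ringChar F ≠ 2) (hrank : Module.finrank F K = 3) :
    ∃ V : Submodule F K, Module.finrank F V = 2 ∧
      (∀ y : K, y ∈ V → y ^ 2 ∈ V → y = 0) ∧
      Nat.card V = Fintype.card F ^ 2 ∧
      ((Fintype.card F : ℝ) ^ 2 = (Fintype.card K : ℝ) ^ ((2 : ℝ) / 3)) ∧
      ¬ ∃ x y : K, y ≠ 0 ∧ x ∈ V ∧ x + y ∈ V ∧ x + y ^ 2 ∈ V := by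
  obtain ⟨φ, hφ1, hφ⟩ := exists_dual_apply_one_forall_eq_zero (Ring.two_ne_zero hchar) hrank
  have hdim : finrank F (LinearMap.ker φ) = 2 := by
    have := Dual.finrank_ker_add_one_of_ne_zero (f := φ) fun h => by simp [h] at hφ1
    omega
  have hV : ∀ y ∈ LinearMap.ker φ, y ^ 2 ∈ LinearMap.ker φ → y = 0 := hφ
  refine ⟨LinearMap.ker φ, hdim, hV, ?_, ?_, ?_⟩
  · rw [natCard_eq_pow_finrank (K := F), hdim, Nat.card_eq_fintype_card]
  · rw [card_eq_pow_finrank (K := F) (V := K), hrank, Nat.cast_pow,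
      ← Real.rpow_natCast _ 3, ← Real.rpow_mul (Nat.cast_nonneg _)]
    norm_num
  · rintro ⟨x, y, hy0, hx, hxy, hxy2⟩
    exact hy0 (hV y (by simpa using sub_mem hxy hx) (by simpa using sub_mem hxy2 hx))
end
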